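/- Every k-decomposable multicomplex Γ ⊆ ℕ_∞^n is shellable. -/

import Mathlib

open MvPolynomial

noncomputable section

namespace Arxiv1703

variable {K : Type*} [Field K] {σ : Type*}

/-- `I` is a monomial ideal: generated by a set of monomials. -/
def IsMonomialIdeal (I : Ideal (MvPolynomial σ K)) : Prop :=
  ∃ G : Set (σ →₀ ℕ),
    I = Ideal.span ((fun a => (monomial a 1 : MvPolynomial σ K)) '' G)

/-- `ass I = Ass (S/I)`, the associated primes of `S/I`. -/
def ass (I : Ideal (MvPolynomial σ K)) : Set (Ideal (MvPolynomial σ K)) :=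
  associatedPrimes (MvPolynomial σ K) (MvPolynomial σ K ⧸ I)

/-- the minimal members (under inclusion) of a set of ideals. -/
def minSet (A : Set (Ideal (MvPolynomial σ K))) : Set (Ideal (MvPolynomial σ K)) :=
  {P | P ∈ A ∧ ∀ Q ∈ A, Q ≤ P → Q = P}

/-- `u` is a pretty cleaner monomial of `I`. -/
def IsPrettyCleaner (I : Ideal (MvPolynomial σ K)) (u : MvPolynomial σ K) : Prop :=
  ∀ P ∈ ass (I.colon (Ideal.span {u})), ∀ Q ∈ ass (I ⊔ Ideal.span {u}), P ≤ Q → P = Q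

/-- `u` is a cleaner monomial of `I`: `min(ass(I + Su)) ⊆ min(ass I)`. -/
def IsCleaner (I : Ideal (MvPolynomial σ K)) (u : MvPolynomial σ K) : Prop :=
  minSet (ass (I ⊔ Ideal.span {u})) ⊆ minSet (ass I)

/-- `I` is pretty `k`-clean (well-founded recursive definition, as inductive predicate). -/
inductive PrettyKClean (k : ℕ) : Ideal (MvPolynomial σ K) → Prop
  | prime (I : Ideal (MvPolynomial σ K)) (h : I.IsPrime) : PrettyKClean k I
  | step (I : Ideal (MvPolynomial σ K)) (a : σ →₀ ℕ) (ha : a ≠ 0)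
      (hu : (monomial a 1 : MvPolynomial σ K) ∉ I)
      (hsupp : a.support.card ≤ k + 1)
      (hcl : IsPrettyCleaner I (monomial a 1))
      (h1 : PrettyKClean k (I.colon (Ideal.span {(monomial a 1 : MvPolynomial σ K)})))
      (h2 : PrettyKClean k (I ⊔ Ideal.span {monomial a 1})) : PrettyKClean k I

/-- `I` is `k`-clean. -/
inductive KClean (k : ℕ) : Ideal (MvPolynomial σ K) → Prop
  | prime (I : Ideal (MvPolynomial σ K)) (h : I.IsPrime) : KClean k I
  | step (I : Ideal (MvPolynomial σ K)) (a : σ →₀ ℕ) (ha : a ≠ 0)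
      (hu : (monomial a 1 : MvPolynomial σ K) ∉ I)
      (hne : ass I = I.minimalPrimes)
      (hsupp : a.support.card ≤ k + 1)
      (hcl : IsCleaner I (monomial a 1))
      (h1 : KClean k (I.colon (Ideal.span {(monomial a 1 : MvPolynomial σ K)})))
      (h2 : KClean k (I ⊔ Ideal.span {monomial a 1})) : KClean k I

/-- `I` is pretty clean: it admits a pretty clean prime filtration by monomial ideals. -/
def IsPrettyClean (I : Ideal (MvPolynomial σ K)) : Prop :=
  ∃ (r : ℕ) (c : Fin (r + 1) → Ideal (MvPolynomial σ K))
    (P : Fin r → Ideal (MvPolynomial σ K)),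
    c 0 = I ∧ c (Fin.last r) = ⊤ ∧
    (∀ i, IsMonomialIdeal (c i)) ∧
    (∀ i : Fin r, c i.castSucc < c i.succ) ∧
    (∀ i : Fin r, (P i).IsPrime) ∧
    (∀ i : Fin r, Nonempty
      ((↥(c i.succ) ⧸ Submodule.comap (Submodule.subtype (c i.succ)) (c i.castSucc))
        ≃ₗ[MvPolynomial σ K] (MvPolynomial σ K ⧸ P i))) ∧
    (∀ i j : Fin r, i < j → P i ≤ P j → P i = P j)

/-! ### Multicomplexes -/

variable {ι : Type*}

/-- `Γ ⊆ ℕ∞^ι` is a multicomplex. -/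
def IsMulticomplex (Γ : Set (ι → ENat)) : Prop :=
  (∀ a ∈ Γ, ∀ b ≤ a, b ∈ Γ) ∧
  (∀ a ∈ Γ, ∃ m ∈ Γ, a ≤ m ∧ ∀ c ∈ Γ, m ≤ c → m = c)

/-- `M(Γ)`, the maximal elements of `Γ`. -/
def maxElts (Γ : Set (ι → ENat)) : Set (ι → ENat) :=
  {m | m ∈ Γ ∧ ∀ c ∈ Γ, m ≤ c → m = c}

def infpt (a : ι → ENat) : Set ι := {i | a i = ⊤}
def fpt (a : ι → ENat) : Set ι := {i | a i ≠ ⊤}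
def fptStar (a : ι → ENat) : Set ι := {i | a i ≠ 0 ∧ a i ≠ ⊤}

/-- the facets of `Γ`. -/
def facets (Γ : Set (ι → ENat)) : Set (ι → ENat) :=
  {a | a ∈ Γ ∧ ∀ m ∈ maxElts Γ, a ≤ m → infpt a = infpt m}

/-- `⟨A⟩`, the smallest multicomplex containing `A` (the order ideal generated by `A`). -/
def mcSpan (A : Set (ι → ENat)) : Set (ι → ENat) := {b | ∃ a ∈ A, b ≤ a}

def star (Γ : Set (ι → ENat)) (a : ι → ENat) : Set (ι → ENat) :=
  mcSpan {b | b ∈ facets Γ ∧ a ≤ b}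

def del (Γ : Set (ι → ENat)) (a : ι → ENat) : Set (ι → ENat) :=
  mcSpan {b | b ∈ facets Γ ∧ ¬ a ≤ b}

def link (Γ : Set (ι → ENat)) (a : ι → ENat) : Set (ι → ENat) :=
  mcSpan ((fun b => b - a) '' {b | b ∈ facets Γ ∧ a ≤ b})

/-- view a vector of naturals as a face in `ℕ∞^ι`. -/
def natFace (a : ι → ℕ) : ι → ENat := fun i => (a i : ENat)

/-- `T` is a Stanley set of degree `a`, i.e. `T = a + ⟨m⟩` for some `m ∈ {0,∞}^ι`. -/
def IsStanleySet (a : ι → ℕ) (T : Set (ι → ENat)) : Prop :=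
  ∃ m : ι → ENat, (∀ i, m i = 0 ∨ m i = ⊤) ∧
    T = (fun b => natFace a + b) '' mcSpan {m}

/-- `a ∈ Γ ∩ ℕ^ι` is a shedding face of `Γ`. -/
def IsSheddingFace (Γ : Set (ι → ENat)) (a : ι → ℕ) : Prop :=
  natFace a ∈ Γ ∧
  (∀ b ∈ facets (star Γ (natFace a)),
    IsStanleySet a (mcSpan {b} \ del Γ (natFace a))) ∧
  (∀ b ∈ facets (star Γ (natFace a)), ∀ c ∈ facets (del Γ (natFace a)),
    fpt b ⊆ fpt c → fpt b = fpt c)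

/-- `Γ` is a `k`-decomposable multicomplex. -/
inductive MCKDecomposable (k : ℕ) : Set (ι → ENat) → Prop
  | single (Γ : Set (ι → ENat)) (h : ∃! a, a ∈ facets Γ) : MCKDecomposable k Γ
  | shed (Γ : Set (ι → ENat)) (a : ι → ℕ)
      (ha : IsSheddingFace Γ a)
      (hcard : (fptStar (natFace a)).ncard ≤ k + 1)
      (h1 : MCKDecomposable k (link Γ (natFace a)))
      (h2 : MCKDecomposable k (del Γ (natFace a))) : MCKDecomposable k Γ

/-- `Γ` is a shellable multicomplex. -/
def Shellable (Γ : Set (ι → ENat)) : Prop :=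
  ∃ (r : ℕ) (a : Fin r → (ι → ENat)), Function.Injective a ∧ facets Γ = Set.range a ∧
    ∃ (b : Fin r → (ι → ℕ)) (m : Fin r → (ι → ENat)),
      (∀ i j, m i j = 0 ∨ m i j = ⊤) ∧
      (∀ i : Fin r, mcSpan {a i} \ mcSpan (a '' {j | j < i})
        = (fun c => natFace (b i) + c) '' mcSpan {m i}) ∧
      (∀ i j : Fin r, mcSpan {m i} ⊆ mcSpan {m j} →
        mcSpan {m i} = mcSpan {m j} ∨ j < i)

/-- the join of two multicomplexes. -/
def mcJoin (Γ₁ Γ₂ : Set (ι → ENat)) : Set (ι → ENat) :=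
  {c | ∃ a ∈ Γ₁, ∃ b ∈ Γ₂, c = a + b}

/-- two multicomplexes in `ℕ∞^n` are disjoint. -/
def mcDisjoint {n : ℕ} (Γ₁ Γ₂ : Set (Fin n → ENat)) : Prop :=
  ∃ m : ℕ, 1 < m ∧ m < n ∧
    (∀ a ∈ Γ₁, ∀ i : Fin n, m < (i : ℕ) + 1 → a i = 0) ∧
    (∀ a ∈ Γ₂, ∀ i : Fin n, (i : ℕ) + 1 ≤ m → a i = 0)

/-! ### Simplicial complexes -/

variable {V : Type*} [DecidableEq V]

def IsSimplicialComplex (Δ : Set (Finset V)) : Prop :=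
  ∀ s ∈ Δ, ∀ t ⊆ s, t ∈ Δ

def sFacets (Δ : Set (Finset V)) : Set (Finset V) :=
  {s | s ∈ Δ ∧ ∀ t ∈ Δ, s ⊆ t → s = t}

def sDel (Δ : Set (Finset V)) (s : Finset V) : Set (Finset V) :=
  {t | t ∈ Δ ∧ ¬ s ⊆ t}

def sLink (Δ : Set (Finset V)) (s : Finset V) : Set (Finset V) :=
  {t | t ∈ Δ ∧ t ∩ s = ∅ ∧ t ∪ s ∈ Δ}

/-- `s` is a shedding face of `Δ`. -/
def sShedding (Δ : Set (Finset V)) (s : Finset V) : Prop :=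
  ∀ t ∈ Δ, s ⊆ t → ∀ v ∈ s, ∃ w, w ∉ t ∧ (insert w t).erase v ∈ Δ

/-- `Δ` is a `k`-decomposable simplicial complex. -/
inductive SCKDecomposable (k : ℕ) : Set (Finset V) → Prop
  | simplex (s : Finset V) : SCKDecomposable k {t | t ⊆ s}
  | void : SCKDecomposable k (∅ : Set (Finset V))
  | empty : SCKDecomposable k ({∅} : Set (Finset V))
  | shed (Δ : Set (Finset V)) (s : Finset V) (hs : s ∈ Δ) (hcard : s.card ≤ k + 1)
      (hshed : sShedding Δ s)
      (h1 : SCKDecomposable k (sDel Δ s))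
      (h2 : SCKDecomposable k (sLink Δ s)) : SCKDecomposable k Δ

/-- the join of two simplicial complexes. -/
def sJoin (Δ₁ Δ₂ : Set (Finset V)) : Set (Finset V) :=
  {u | ∃ s ∈ Δ₁, ∃ t ∈ Δ₂, u = s ∪ t}

/-- `a_F`: the `{0,∞}`-vector of a subset `F ⊆ [n]`. -/
def faceOfFinset {n : ℕ} (F : Finset (Fin n)) : Fin n → ENat :=
  fun i => if i ∈ F then (⊤ : ENat) else 0

/-! ### The correspondence between multicomplexes and monomial ideals -/

/-- `I(Γ)`: the monomial ideal associated to a multicomplex `Γ`. -/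
def idealOf (K : Type*) [Field K] {σ : Type*} (Γ : Set (σ → ENat)) :
    Ideal (MvPolynomial σ K) :=
  Ideal.span {p | ∃ a : σ →₀ ℕ, natFace ⇑a ∉ Γ ∧ p = monomial a 1}

/-- `Γ(I)`: the multicomplex associated to a monomial ideal `I`. -/
def gammaOf {K : Type*} [Field K] {σ : Type*} (I : Ideal (MvPolynomial σ K)) :
    Set (σ → ENat) :=
  {c | ∀ b : σ →₀ ℕ, natFace ⇑b ≤ c → (monomial b 1 : MvPolynomial σ K) ∉ I}

/-! ### Polarization -/

/-- the index type of the variables of the polarized ring. -/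
abbrev polarType {n r : ℕ} (g : Fin r → (Fin n →₀ ℕ)) : Type :=
  (j : Fin n) × Fin (Finset.univ.sup fun i => g i j)

/-- the exponent vector of the polarization `v_i` of the generator `u_i = x^(g i)`. -/
def polarExp {n r : ℕ} (g : Fin r → (Fin n →₀ ℕ)) (i : Fin r) : polarType g →₀ ℕ :=
  Finsupp.equivFunOnFinite.symm fun p => if (p.2 : ℕ) < g i p.1 then 1 else 0

/-- the polarization `I^p` of the monomial ideal minimally generated by the `x^(g i)`. -/
def polarIdeal (K : Type*) [Field K] {n r : ℕ} (g : Fin r → (Fin n →₀ ℕ)) :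
    Ideal (MvPolynomial (polarType g) K) :=
  Ideal.span (Set.range fun i => (monomial (polarExp g i) 1 : MvPolynomial (polarType g) K))


/-! ### Auxiliary material for Statement 10 -/

section Aux10

open Set

variable {n : ℕ}

/-! #### scalar `ℕ∞` lemmas -/

private lemma enat_add_le (t : ℕ) (x y : ℕ∞) : (t:ℕ∞) + x ≤ t + y ↔ x ≤ y := by
  cases x using ENat.recTopCoe <;> cases y using ENat.recTopCoe <;>
    simp [← Nat.cast_add, Nat.cast_le]

private lemma enat_add_inj (t : ℕ) (x y : ℕ∞) : (t:ℕ∞) + x = t + y ↔ x = y := by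
  cases x using ENat.recTopCoe <;> cases y using ENat.recTopCoe <;>
    simp [← Nat.cast_add, Nat.cast_inj]

private lemma enat_sub_add (t : ℕ) {y : ℕ∞} (h : (t:ℕ∞) ≤ y) : (t:ℕ∞) + (y - t) = y := by
  cases y using ENat.recTopCoe
  · simp
  · rename_i m
    rw [Nat.cast_le] at h
    rw [← ENat.coe_sub, ← Nat.cast_add]
    congr 1; omega

private lemma enat_add_sub (t : ℕ) (x : ℕ∞) : ((t:ℕ∞) + x) - t = x := by
  cases x using ENat.recTopCoe
  · simp [ENat.sub_eq_top_iff]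
  · rw [← Nat.cast_add, ← ENat.coe_sub]
    congr 1; omega

private lemma enat_add_top (t : ℕ) (x : ℕ∞) : (t:ℕ∞) + x = ⊤ ↔ x = ⊤ := by
  cases x using ENat.recTopCoe <;> simp [← Nat.cast_add]

private lemma enat_sub_top (t : ℕ) (x : ℕ∞) : x - (t:ℕ∞) = ⊤ ↔ x = ⊤ := by
  cases x using ENat.recTopCoe <;> simp [ENat.sub_eq_top_iff]

/-! #### vector lemmas -/

private lemma natFace_add (a b : Fin n → ℕ) :
    natFace (a + b) = natFace a + natFace b := by
  funext i; simp [natFace, Nat.cast_add]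

private lemma vec_add_le (a : Fin n → ℕ) {x y : Fin n → ENat} :
    natFace a + x ≤ natFace a + y ↔ x ≤ y := by
  constructor <;> intro h i
  · exact (enat_add_le (a i) (x i) (y i)).1 (h i)
  · exact (enat_add_le (a i) (x i) (y i)).2 (h i)

private lemma vec_add_inj (a : Fin n → ℕ) {x y : Fin n → ENat}
    (h : natFace a + x = natFace a + y) : x = y := by
  funext i
  exact (enat_add_inj (a i) (x i) (y i)).1 (congrFun h i)

private lemma vec_sub_add (a : Fin n → ℕ) {b : Fin n → ENat} (h : natFace a ≤ b) :
    natFace a + (b - natFace a) = b := by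
  funext i; exact enat_sub_add (a i) (h i)

private lemma vec_add_sub (a : Fin n → ℕ) (x : Fin n → ENat) :
    (natFace a + x) - natFace a = x := by
  funext i; exact enat_add_sub (a i) (x i)

private lemma vec_infpt_add (a : Fin n → ℕ) (x : Fin n → ENat) :
    infpt (natFace a + x) = infpt x := by
  ext i; exact enat_add_top (a i) (x i)

private lemma vec_infpt_sub (a : Fin n → ℕ) (x : Fin n → ENat) :
    infpt (x - natFace a) = infpt x := by
  ext i; exact enat_sub_top (a i) (x i)

private lemma vec_le_add (a : Fin n → ℕ) (x : Fin n → ENat) :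
    natFace a ≤ natFace a + x := fun i => le_self_add

private lemma vec_sub_le_sub (a : Fin n → ℕ) {x y : Fin n → ENat} (h : x ≤ y) :
    x - natFace a ≤ y - natFace a := fun i => tsub_le_tsub_right (h i) _

/-- two `{0,∞}`-valued vectors with the same infinite part are equal. -/
private lemma m01_eq {m m' : Fin n → ENat} (h : ∀ i, m i = 0 ∨ m i = ⊤)
    (h' : ∀ i, m' i = 0 ∨ m' i = ⊤) (hi : infpt m = infpt m') : m = m' := by
  funext i
  have hi' : (m i = ⊤) ↔ (m' i = ⊤) := by
    constructor <;> intro hh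
    · exact (Set.ext_iff.1 hi i).1 hh
    · exact (Set.ext_iff.1 hi i).2 hh
  rcases h i with h0 | ht <;> rcases h' i with h0' | ht' <;> simp_all

/-! #### `mcSpan` lemmas -/

private lemma mem_mcSpan {A : Set (Fin n → ENat)} {b : Fin n → ENat} :
    b ∈ mcSpan A ↔ ∃ a ∈ A, b ≤ a := Iff.rfl

private lemma subset_mcSpan (A : Set (Fin n → ENat)) : A ⊆ mcSpan A :=
  fun a ha => ⟨a, ha, le_rfl⟩

private lemma mcSpan_mono {A B : Set (Fin n → ENat)} (h : A ⊆ B) : mcSpan A ⊆ mcSpan B :=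
  fun _ ⟨a, ha, hba⟩ => ⟨a, h ha, hba⟩

private lemma mcSpan_empty : mcSpan (∅ : Set (Fin n → ENat)) = ∅ := by
  ext b; simp [mem_mcSpan]

private lemma mcSpan_union (A B : Set (Fin n → ENat)) :
    mcSpan (A ∪ B) = mcSpan A ∪ mcSpan B := by
  ext b
  simp only [mem_mcSpan, Set.mem_union]
  constructor
  · rintro ⟨a, ha | ha, hba⟩
    · exact Or.inl ⟨a, ha, hba⟩
    · exact Or.inr ⟨a, ha, hba⟩
  · rintro (⟨a, ha, hba⟩ | ⟨a, ha, hba⟩)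
    · exact ⟨a, Or.inl ha, hba⟩
    · exact ⟨a, Or.inr ha, hba⟩

private lemma mem_mcSpan_singleton {a b : Fin n → ENat} :
    b ∈ mcSpan ({a} : Set (Fin n → ENat)) ↔ b ≤ a := by
  simp [mem_mcSpan]

private lemma mcSpan_singleton_subset {x y : Fin n → ENat} :
    mcSpan ({x} : Set (Fin n → ENat)) ⊆ mcSpan {y} ↔ x ≤ y := by
  constructor
  · intro h
    exact mem_mcSpan_singleton.1 (h (subset_mcSpan _ rfl))
  · intro h b hb
    exact mem_mcSpan_singleton.2 ((mem_mcSpan_singleton.1 hb).trans h)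

private lemma mcSpan_downclosed {A : Set (Fin n → ENat)} {x y : Fin n → ENat}
    (hx : x ∈ mcSpan A) (hyx : y ≤ x) : y ∈ mcSpan A := by
  obtain ⟨a, ha, hxa⟩ := hx
  exact ⟨a, ha, hyx.trans hxa⟩

/-! #### finiteness -/

private lemma maxElts_antichain (Γ : Set (Fin n → ENat)) :
    IsAntichain (· ≤ ·) (maxElts Γ) := by
  intro a ha b hb hne hle
  exact hne (ha.2 b hb.1 hle)

private lemma maxElts_finite (Γ : Set (Fin n → ENat)) : (maxElts Γ).Finite := by
  haveI : IsWellOrder ℕ∞ (· < ·) := ⟨⟩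
  exact (maxElts_antichain Γ).finite_of_partiallyWellOrderedOn (Set.isPWO_of_wellQuasiOrderedLE _)

private lemma maxElts_subset_facets (Γ : Set (Fin n → ENat)) : maxElts Γ ⊆ facets Γ := by
  intro m hm
  refine ⟨hm.1, fun m' hm' hle => ?_⟩
  rw [hm.2 m' hm'.1 hle]

private lemma facets_finite {Γ : Set (Fin n → ENat)} (hΓ : IsMulticomplex Γ) :
    (facets Γ).Finite := by
  have hsub : facets Γ ⊆ ⋃ m ∈ maxElts Γ, {b | b ≤ m ∧ infpt b = infpt m} := by
    intro b hb
    obtain ⟨m, hmΓ, hbm, hmax⟩ := hΓ.2 b hb.1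
    have hm : m ∈ maxElts Γ := ⟨hmΓ, hmax⟩
    exact Set.mem_biUnion hm ⟨hbm, hb.2 m hm hbm⟩
  refine Set.Finite.subset (Set.Finite.biUnion (maxElts_finite Γ) fun m _ => ?_) hsub
  -- each fiber is finite
  set φ : (Fin n → ENat) → (Fin n → ℕ) := fun b i => (b i).toNat with hφ
  have hinj : Set.InjOn φ {b | b ≤ m ∧ infpt b = infpt m} := by
    rintro b ⟨hbm, hb⟩ b' ⟨hbm', hb'⟩ hbb
    funext i
    by_cases hti : m i = ⊤
    · have h1 : b i = ⊤ := (Set.ext_iff.1 hb i).2 hti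
      have h2 : b' i = ⊤ := (Set.ext_iff.1 hb' i).2 hti
      rw [h1, h2]
    · have h1 : b i ≠ ⊤ := fun hc => hti ((Set.ext_iff.1 hb i).1 hc)
      have h2 : b' i ≠ ⊤ := fun hc => hti ((Set.ext_iff.1 hb' i).1 hc)
      have := congrFun hbb i
      simp only [hφ] at this
      rw [← ENat.coe_toNat h1, ← ENat.coe_toNat h2, this]
  have himg : φ '' {b | b ≤ m ∧ infpt b = infpt m} ⊆ Set.Icc 0 (φ m) := by
    rintro c ⟨b, ⟨hbm, hb⟩, rfl⟩
    refine ⟨fun i => Nat.zero_le _, fun i => ?_⟩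
    by_cases hti : m i = ⊤
    · have h1 : b i = ⊤ := (Set.ext_iff.1 hb i).2 hti
      simp [hφ, h1, hti]
    · exact ENat.toNat_le_toNat (hbm i) hti
  exact Set.Finite.of_finite_image ((Set.finite_Icc 0 (φ m)).subset himg) hinj

private lemma exists_maximal_of_finite {F : Set (Fin n → ENat)} (hF : F.Finite)
    {g : Fin n → ENat} (hg : g ∈ F) :
    ∃ m ∈ F, g ≤ m ∧ ∀ y ∈ F, m ≤ y → m = y := by
  obtain ⟨m, hm, hmax⟩ := Set.Finite.exists_maximalFor id {y ∈ F | g ≤ y}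
    (hF.subset (Set.sep_subset _ _)) ⟨g, hg, le_rfl⟩
  refine ⟨m, hm.1, hm.2, fun y hy hmy => ?_⟩
  exact le_antisymm hmy (hmax ⟨hy, hm.2.trans hmy⟩ hmy)

private lemma isMulticomplex_mcSpan {F : Set (Fin n → ENat)} (hF : F.Finite) :
    IsMulticomplex (mcSpan F) := by
  constructor
  · intro x hx y hyx
    exact mcSpan_downclosed hx hyx
  · rintro x ⟨g, hg, hxg⟩
    obtain ⟨m, hmF, hgm, hmax⟩ := exists_maximal_of_finite hF hg
    refine ⟨m, subset_mcSpan F hmF, hxg.trans hgm, ?_⟩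
    rintro y ⟨g', hg', hyg'⟩ hmy
    have := hmax g' hg' (hmy.trans hyg')
    exact le_antisymm hmy (hyg'.trans this.ge)

end Aux10

section Aux10b

open Set

variable {n : ℕ}

private lemma infpt_eq_of_fpt_eq {x y : Fin n → ENat} (h : fpt x = fpt y) :
    infpt x = infpt y := by
  ext i
  have := Set.ext_iff.1 h i
  simp only [fpt, Set.mem_setOf_eq] at this
  simp only [infpt, Set.mem_setOf_eq]
  exact not_iff_not.1 this

private lemma facets_subset (Γ : Set (Fin n → ENat)) : facets Γ ⊆ Γ := fun _ h => h.1

private lemma maxElts_mcSpan_subset {F : Set (Fin n → ENat)} :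
    maxElts (mcSpan F) ⊆ F := by
  rintro m ⟨⟨g, hg, hmg⟩, hmax⟩
  rwa [hmax g (subset_mcSpan F hg) hmg]

private lemma maxElts_star {Γ : Set (Fin n → ENat)} {a : Fin n → ℕ}
    (hΓ : IsMulticomplex Γ) :
    maxElts (star Γ (natFace a)) = {m | m ∈ maxElts Γ ∧ natFace a ≤ m} := by
  ext m
  constructor
  · intro hm
    have hmG : m ∈ {b | b ∈ facets Γ ∧ natFace a ≤ b} := maxElts_mcSpan_subset hm
    obtain ⟨m', hm'Γ, hmm', hmax'⟩ := hΓ.2 m hmG.1.1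
    have hm'max : m' ∈ maxElts Γ := ⟨hm'Γ, hmax'⟩
    have hm'G : m' ∈ {b | b ∈ facets Γ ∧ natFace a ≤ b} :=
      ⟨maxElts_subset_facets _ hm'max, hmG.2.trans hmm'⟩
    have heq : m = m' := hm.2 m' (subset_mcSpan _ hm'G) hmm'
    rw [heq]
    exact ⟨hm'max, hm'G.2⟩
  · rintro ⟨hmmax, hAm⟩
    refine ⟨subset_mcSpan _ ⟨maxElts_subset_facets _ hmmax, hAm⟩, ?_⟩
    rintro y ⟨g, hg, hyg⟩ hmy
    have hmg : m = g := hmmax.2 g hg.1.1 (hmy.trans hyg)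
    exact le_antisymm hmy (by rw [hmg]; exact hyg)

private lemma Gst_subset_facets_star {Γ : Set (Fin n → ENat)} {a : Fin n → ℕ}
    (hΓ : IsMulticomplex Γ) :
    {b | b ∈ facets Γ ∧ natFace a ≤ b} ⊆ facets (star Γ (natFace a)) := by
  intro b hb
  refine ⟨subset_mcSpan _ hb, ?_⟩
  intro m hm hbm
  rw [maxElts_star hΓ] at hm
  exact hb.1.2 m hm.1 hbm

private lemma maxElts_link {Γ : Set (Fin n → ENat)} {a : Fin n → ℕ}
    (hΓ : IsMulticomplex Γ) :
    maxElts (link Γ (natFace a)) =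
      (fun b => b - natFace a) '' {m | m ∈ maxElts Γ ∧ natFace a ≤ m} := by
  ext x
  constructor
  · intro hx
    have hxG : x ∈ (fun b => b - natFace a) '' {b | b ∈ facets Γ ∧ natFace a ≤ b} :=
      maxElts_mcSpan_subset hx
    obtain ⟨b, hbG, rfl⟩ := hxG
    obtain ⟨m, hmΓ, hbm, hmax⟩ := hΓ.2 b hbG.1.1
    have hmmax : m ∈ maxElts Γ := ⟨hmΓ, hmax⟩
    have hAm : natFace a ≤ m := hbG.2.trans hbm
    have hmem : m - natFace a ∈ link Γ (natFace a) :=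
      subset_mcSpan _ ⟨m, ⟨maxElts_subset_facets _ hmmax, hAm⟩, rfl⟩
    have heq : b - natFace a = m - natFace a :=
      hx.2 (m - natFace a) hmem (vec_sub_le_sub a hbm)
    exact ⟨m, ⟨hmmax, hAm⟩, heq.symm⟩
  · rintro ⟨m, ⟨hmmax, hAm⟩, rfl⟩
    refine ⟨subset_mcSpan _ ⟨m, ⟨maxElts_subset_facets _ hmmax, hAm⟩, rfl⟩, ?_⟩
    rintro y ⟨g', ⟨b, hbG, rfl⟩, hyg⟩ hmy
    -- hmy : m - A ≤ y, hyg : y ≤ b - A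
    have h1 : m ≤ natFace a + y := by
      calc m = natFace a + (m - natFace a) := (vec_sub_add a hAm).symm
      _ ≤ natFace a + y := (vec_add_le a).2 hmy
    have h2 : natFace a + y ≤ b := by
      calc natFace a + y ≤ natFace a + (b - natFace a) := (vec_add_le a).2 hyg
      _ = b := vec_sub_add a hbG.2
    have hmb : m = b := hmmax.2 b hbG.1.1 (h1.trans h2)
    have h3 : natFace a + y = m := le_antisymm (by rw [hmb]; exact h2) h1
    calc m - natFace a = (natFace a + y) - natFace a := by rw [h3]
    _ = y := vec_add_sub a y

private lemma facets_link {Γ : Set (Fin n → ENat)} {a : Fin n → ℕ}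
    (hΓ : IsMulticomplex Γ) :
    facets (link Γ (natFace a)) =
      (fun b => b - natFace a) '' {b | b ∈ facets Γ ∧ natFace a ≤ b} := by
  ext x
  constructor
  · intro hx
    obtain ⟨g', ⟨b, hbG, rfl⟩, hxg⟩ := hx.1
    refine ⟨natFace a + x, ⟨?_, vec_le_add a x⟩, vec_add_sub a x⟩
    have hmemΓ : natFace a + x ∈ Γ := by
      have h2 : natFace a + x ≤ b := by
        calc natFace a + x ≤ natFace a + (b - natFace a) := (vec_add_le a).2 hxg
        _ = b := vec_sub_add a hbG.2
      exact hΓ.1 b hbG.1.1 _ h2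
    refine ⟨hmemΓ, ?_⟩
    intro m hmmax hlem
    have hAm : natFace a ≤ m := (vec_le_add a x).trans hlem
    have hmlk : m - natFace a ∈ maxElts (link Γ (natFace a)) := by
      rw [maxElts_link hΓ]
      exact ⟨m, ⟨hmmax, hAm⟩, rfl⟩
    have hxle : x ≤ m - natFace a := by
      have := vec_sub_le_sub a hlem
      rwa [vec_add_sub a x] at this
    have h4 : infpt x = infpt (m - natFace a) := hx.2 (m - natFace a) hmlk hxle
    rw [vec_infpt_add, h4, vec_infpt_sub]
  · rintro ⟨b, hbG, rfl⟩
    refine ⟨subset_mcSpan _ ⟨b, hbG, rfl⟩, ?_⟩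
    intro m' hm' hle
    rw [maxElts_link hΓ] at hm'
    obtain ⟨m, ⟨hmmax, hAm⟩, rfl⟩ := hm'
    have hbm : b ≤ m := by
      calc b = natFace a + (b - natFace a) := (vec_sub_add a hbG.2).symm
      _ ≤ natFace a + (m - natFace a) := (vec_add_le a).2 hle
      _ = m := vec_sub_add a hAm
    rw [vec_infpt_sub, vec_infpt_sub]
    exact hbG.1.2 m hmmax hbm

private lemma facets_del {Γ : Set (Fin n → ENat)} {a : Fin n → ℕ}
    (hΓ : IsMulticomplex Γ) (hsh : IsSheddingFace Γ a) :
    facets (del Γ (natFace a)) = {b | b ∈ facets Γ ∧ ¬ natFace a ≤ b} := by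
  have hsup : {b | b ∈ facets Γ ∧ ¬ natFace a ≤ b} ⊆ facets (del Γ (natFace a)) := by
    intro b hb
    refine ⟨subset_mcSpan _ hb, ?_⟩
    intro m hm hbm
    have hmG : m ∈ {b | b ∈ facets Γ ∧ ¬ natFace a ≤ b} := maxElts_mcSpan_subset hm
    obtain ⟨m', hm'Γ, hmm', hmax'⟩ := hΓ.2 m hmG.1.1
    have hm'max : m' ∈ maxElts Γ := ⟨hm'Γ, hmax'⟩
    have e1 : infpt b = infpt m' := hb.1.2 m' hm'max (hbm.trans hmm')
    have e2 : infpt m = infpt m' := hmG.1.2 m' hm'max hmm'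
    rw [e1, e2]
  refine Set.Subset.antisymm ?_ hsup
  intro c hc
  obtain ⟨g, hgG, hcg⟩ := hc.1
  have hnA : ¬ natFace a ≤ c := fun h => hgG.2 (h.trans hcg)
  refine ⟨⟨hΓ.1 g hgG.1.1 c hcg, ?_⟩, hnA⟩
  intro m hmmax hcm
  by_cases hAm : natFace a ≤ m
  · have hdelmc : IsMulticomplex (del Γ (natFace a)) :=
      isMulticomplex_mcSpan ((facets_finite hΓ).subset fun x hx => hx.1)
    obtain ⟨dd, hddel, hcdd, hddmax⟩ := hdelmc.2 c hc.1
    have hddM : dd ∈ maxElts (del Γ (natFace a)) := ⟨hddel, hddmax⟩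
    have h1 : infpt c = infpt dd := hc.2 dd hddM hcdd
    have hddG : dd ∈ {b | b ∈ facets Γ ∧ ¬ natFace a ≤ b} := maxElts_mcSpan_subset hddM
    have hddF : dd ∈ facets (del Γ (natFace a)) := hsup hddG
    have hmF : m ∈ facets (star Γ (natFace a)) :=
      Gst_subset_facets_star hΓ ⟨maxElts_subset_facets _ hmmax, hAm⟩
    have hfpt : fpt m ⊆ fpt dd := by
      intro i hi
      intro hddi
      have hic : i ∈ infpt c := by rw [h1]; exact hddi
      have hci : c i = ⊤ := hic
      have : (⊤ : ℕ∞) ≤ m i := by rw [← hci]; exact hcm i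
      exact hi (top_le_iff.1 this)
    have hfpt2 : fpt m = fpt dd := hsh.2.2 m hmF dd hddF hfpt
    have h2 : infpt m = infpt dd := infpt_eq_of_fpt_eq hfpt2
    rw [h1]
    exact h2.symm
  · have hmdel : m ∈ maxElts (del Γ (natFace a)) := by
      refine ⟨subset_mcSpan _ ⟨maxElts_subset_facets _ hmmax, hAm⟩, ?_⟩
      rintro y ⟨g', hg', hyg'⟩ hmy
      have hyΓ : y ∈ Γ := hΓ.1 g' hg'.1.1 y hyg'
      exact hmmax.2 y hyΓ hmy
    exact hc.2 m hmdel hcm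

private lemma stanley_top {u : Fin n → ENat} {S : Set (Fin n → ENat)}
    (hdc : ∀ x ∈ S, ∀ y, y ≤ x → y ∈ S)
    {bv : Fin n → ℕ} {m : Fin n → ENat}
    (hEq : mcSpan {u} \ S = (fun c => natFace bv + c) '' mcSpan {m}) :
    u ∉ S ∧ u = natFace bv + m := by
  have hmem : natFace bv + m ∈ mcSpan {u} \ S := by
    rw [hEq]; exact ⟨m, mem_mcSpan_singleton.2 le_rfl, rfl⟩
  have htop_le : natFace bv + m ≤ u := mem_mcSpan_singleton.1 hmem.1
  have huS : u ∉ S := fun hu => hmem.2 (hdc u hu _ htop_le)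
  have hu2 : u ∈ mcSpan {u} \ S := ⟨mem_mcSpan_singleton.2 le_rfl, huS⟩
  rw [hEq] at hu2
  obtain ⟨y, hy, hyu⟩ := hu2
  have hmy : m ≤ y := by
    have h' := htop_le
    rw [← hyu] at h'
    exact (vec_add_le bv).1 h'
  have hym : y = m := le_antisymm (mem_mcSpan_singleton.1 hy) hmy
  exact ⟨huS, by rw [← hyu, hym]⟩

end Aux10b

section Aux10c

open Set

variable {n : ℕ}

private lemma enat_sub_one_top (x : ℕ∞) : x - 1 = ⊤ ↔ x = ⊤ := by
  simpa using enat_sub_top 1 x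

private lemma enat_pred_ne {x : ℕ∞} (h0 : x ≠ 0) (ht : x ≠ ⊤) : x - 1 ≠ x := by
  cases x using ENat.recTopCoe
  · exact absurd rfl ht
  · rename_i t
    have ht0 : t ≠ 0 := by rintro rfl; exact h0 rfl
    intro hc
    rw [show ((1:ℕ∞)) = ((1:ℕ):ℕ∞) from by norm_cast, ← ENat.coe_sub, Nat.cast_inj] at hc
    omega

private lemma shellable_of_unique_facet {Γ : Set (Fin n → ENat)}
    (hΓ : IsMulticomplex Γ) (hex : ∃! a, a ∈ facets Γ) : Shellable Γ := by
  obtain ⟨f, hf, huniq⟩ := hex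
  have hfacets : facets Γ = {f} := by
    ext x
    constructor
    · intro hx; exact huniq x hx
    · rintro rfl; exact hf
  have hmax_sub : maxElts Γ ⊆ {f} := hfacets ▸ maxElts_subset_facets Γ
  have h01 : ∀ i, f i = 0 ∨ f i = ⊤ := by
    intro i
    by_contra hcon
    push_neg at hcon
    obtain ⟨h0, ht⟩ := hcon
    set x := Function.update f i (f i - 1) with hx
    have hxle : x ≤ f := by
      intro j
      by_cases hji : j = i
      · subst hji
        simp only [hx, Function.update_self]
        exact tsub_le_self
      · simp [hx, Function.update_of_ne hji]
    have hinfpt : infpt x = infpt f := by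
      ext j
      by_cases hji : j = i
      · subst hji
        simp only [infpt, Set.mem_setOf_eq, hx, Function.update_self]
        exact enat_sub_one_top (f j)
      · simp [infpt, hx, Function.update_of_ne hji]
    have hxf : x ∈ facets Γ := by
      refine ⟨hΓ.1 f hf.1 x hxle, ?_⟩
      intro m hm hxm
      have hmf : m = f := hmax_sub hm
      rw [hmf, hinfpt]
    have hxeq : x = f := huniq x hxf
    have : f i - 1 = f i := by
      have := congrFun hxeq i
      rwa [hx, Function.update_self] at this
    exact enat_pred_ne h0 ht this
  refine ⟨1, fun _ => f, fun s t _ => Subsingleton.elim s t, ?_,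
    fun _ => 0, fun _ => f, fun _ => h01, ?_, ?_⟩
  · ext x
    simp only [Set.mem_range, hfacets, Set.mem_singleton_iff]
    exact ⟨fun h => h ▸ ⟨0, rfl⟩, fun ⟨_, h⟩ => h.symm⟩
  · intro i
    have hempty : {j : Fin 1 | j < i} = ∅ := by
      ext j
      simp only [Set.mem_setOf_eq, Set.mem_empty_iff_false, iff_false]
      intro hj
      exact absurd (Subsingleton.elim j i ▸ hj) (lt_irrefl i)
    rw [hempty, Set.image_empty, mcSpan_empty, Set.diff_empty]
    have hnf0 : natFace (0 : Fin n → ℕ) = 0 := by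
      funext j; simp [natFace]
    rw [hnf0]
    ext y
    constructor
    · intro hy; exact ⟨y, hy, by simp⟩
    · rintro ⟨c, hc, rfl⟩; simpa using hc
  · intro i j _
    exact Or.inl (by rw [Subsingleton.elim i j])

end Aux10c

section Aux10d

open Set

variable {n : ℕ}

private def glue {α : Type*} (p q : ℕ) (d : Fin p → α) (e : Fin q → α) :
    Fin (p + q) → α :=
  fun t => if h : (t : ℕ) < p then d ⟨t, h⟩
    else e ⟨(t : ℕ) - p, by have := t.isLt; omega⟩

private lemma glue_lt {α : Type*} {p q : ℕ} (d : Fin p → α) (e : Fin q → α)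
    (t : Fin (p + q)) (h : (t : ℕ) < p) : glue p q d e t = d ⟨t, h⟩ := dif_pos h

private lemma glue_ge {α : Type*} {p q : ℕ} (d : Fin p → α) (e : Fin q → α)
    (t : Fin (p + q)) (h : ¬ (t : ℕ) < p) (h2 : (t : ℕ) - p < q) :
    glue p q d e t = e ⟨(t : ℕ) - p, h2⟩ := dif_neg h

private lemma glue_castAdd {α : Type*} {p q : ℕ} (d : Fin p → α) (e : Fin q → α)
    (i : Fin p) : glue p q d e (Fin.castAdd q i) = d i := by
  rw [glue_lt d e _ (by simpa using i.isLt)]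
  congr 1

private lemma glue_natAdd {α : Type*} {p q : ℕ} (d : Fin p → α) (e : Fin q → α)
    (j : Fin q) : glue p q d e (Fin.natAdd p j) = e j := by
  rw [glue_ge d e _ (by simp) (by have := j.isLt; simpa using this)]
  congr 1
  exact Fin.ext (by simp)

private lemma glue_image_lt {α : Type*} {p q : ℕ} (d : Fin p → α) (e : Fin q → α)
    (t : Fin (p + q)) (h : (t : ℕ) < p) :
    glue p q d e '' {s | s < t} = d '' {j : Fin p | j < ⟨(t : ℕ), h⟩} := by
  ext x
  constructor
  · rintro ⟨s, hs, rfl⟩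
    have hs' : (s : ℕ) < p := lt_trans hs h
    rw [glue_lt d e s hs']
    exact ⟨⟨s, hs'⟩, hs, rfl⟩
  · rintro ⟨j, hj, rfl⟩
    exact ⟨Fin.castAdd q j, hj, glue_castAdd d e j⟩

private lemma glue_image_ge {α : Type*} {p q : ℕ} (d : Fin p → α) (e : Fin q → α)
    (t : Fin (p + q)) (h : ¬ (t : ℕ) < p) (h2 : (t : ℕ) - p < q) :
    glue p q d e '' {s | s < t}
      = Set.range d ∪ e '' {k : Fin q | k < ⟨(t : ℕ) - p, h2⟩} := by
  ext x
  constructor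
  · rintro ⟨s, hs, rfl⟩
    by_cases hs' : (s : ℕ) < p
    · rw [glue_lt d e s hs']
      exact Or.inl ⟨⟨s, hs'⟩, rfl⟩
    · have hs2 : (s : ℕ) - p < q := by have := s.isLt; omega
      rw [glue_ge d e s hs' hs2]
      refine Or.inr ⟨⟨(s : ℕ) - p, hs2⟩, ?_, rfl⟩
      show (s : ℕ) - p < (t : ℕ) - p
      have : (s : ℕ) < (t : ℕ) := hs
      omega
  · rintro (⟨i, rfl⟩ | ⟨k, hk, rfl⟩)
    · refine ⟨Fin.castAdd q i, ?_, glue_castAdd d e i⟩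
      show ((Fin.castAdd q i : Fin (p + q)) : ℕ) < (t : ℕ)
      have := i.isLt
      simp only [Fin.coe_castAdd]
      omega
    · refine ⟨Fin.natAdd p k, ?_, glue_natAdd d e k⟩
      show ((Fin.natAdd p k : Fin (p + q)) : ℕ) < (t : ℕ)
      have hk' : (k : ℕ) < (t : ℕ) - p := hk
      simp only [Fin.coe_natAdd]
      omega

end Aux10d

section Aux10e

open Set

variable {n : ℕ}

private lemma shellable_shed {Γ : Set (Fin n → ENat)} {av : Fin n → ℕ}
    (hΓ : IsMulticomplex Γ) (hsh : IsSheddingFace Γ av)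
    (hlk : Shellable (link Γ (natFace av)))
    (hdel : Shellable (del Γ (natFace av))) : Shellable Γ := by
  classical
  obtain ⟨p, d, hdinj, hdrange, bd, md, hmd01, hmdEq, hmdOrd⟩ := hdel
  obtain ⟨q, e, heinj, herange, be, me, hme01, hmeEq, hmeOrd⟩ := hlk
  have hFdel : facets (del Γ (natFace av)) = {b | b ∈ facets Γ ∧ ¬ natFace av ≤ b} :=
    facets_del hΓ hsh
  have hFlk : facets (link Γ (natFace av)) =
      (fun b => b - natFace av) '' {b | b ∈ facets Γ ∧ natFace av ≤ b} := facets_link hΓ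
  have hed : ∀ j : Fin q, natFace av + e j ∈ {b | b ∈ facets Γ ∧ natFace av ≤ b} := by
    intro j
    have h1 : e j ∈ facets (link Γ (natFace av)) := by
      rw [herange]; exact Set.mem_range_self j
    rw [hFlk] at h1
    obtain ⟨b, hb, heq⟩ := h1
    simp only at heq
    rw [← heq, vec_sub_add av hb.2]
    exact hb
  have hdd : ∀ i : Fin p, d i ∈ {b | b ∈ facets Γ ∧ ¬ natFace av ≤ b} := by
    intro i
    have h1 : d i ∈ facets (del Γ (natFace av)) := by
      rw [hdrange]; exact Set.mem_range_self i
    rwa [hFdel] at h1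
  have hrange_d_span : mcSpan (Set.range d) = del Γ (natFace av) := by
    rw [← hdrange, hFdel]; rfl
  have hdel_dc : ∀ x ∈ del Γ (natFace av), ∀ y, y ≤ x → y ∈ del Γ (natFace av) :=
    fun x hx y hy => mcSpan_downclosed hx hy
  have hdtop : ∀ i : Fin p, d i = natFace (bd i) + md i :=
    fun i => (stanley_top (fun x hx y hy => mcSpan_downclosed hx hy) (hmdEq i)).2
  have hetop : ∀ j : Fin q, e j = natFace (be j) + me j :=
    fun j => (stanley_top (fun x hx y hy => mcSpan_downclosed hx hy) (hmeEq j)).2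
  have hstar : ∀ j : Fin q,
      mcSpan {natFace av + e j} \ del Γ (natFace av)
        = (fun c => natFace av + c) '' mcSpan {e j} := by
    intro j
    obtain ⟨m, _, hmEq⟩ := hsh.2.1 (natFace av + e j) (Gst_subset_facets_star hΓ (hed j))
    have htop := (stanley_top hdel_dc hmEq).2
    have hme' : e j = m := vec_add_inj av htop
    rw [hmEq, ← hme']
  refine ⟨p + q, glue p q d (fun j => natFace av + e j), ?_, ?_,
    glue p q bd (fun j => av + be j), glue p q md me, ?_, ?_, ?_⟩
  -- injectivity
  · intro s t hst
    by_cases hs : (s : ℕ) < p <;> by_cases ht : (t : ℕ) < p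
    · rw [glue_lt _ _ s hs, glue_lt _ _ t ht] at hst
      have h1 := congrArg Fin.val (hdinj hst)
      exact Fin.ext (by simpa using h1)
    · rw [glue_lt _ _ s hs, glue_ge _ _ t ht (by have := t.isLt; omega)] at hst
      exact absurd (hst ▸ vec_le_add av _) (hdd ⟨s, hs⟩).2
    · rw [glue_ge _ _ s hs (by have := s.isLt; omega), glue_lt _ _ t ht] at hst
      exact absurd (hst.symm ▸ vec_le_add av _) (hdd ⟨t, ht⟩).2
    · rw [glue_ge _ _ s hs (by have := s.isLt; omega),
        glue_ge _ _ t ht (by have := t.isLt; omega)] at hst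
      have h1 := congrArg Fin.val (heinj (vec_add_inj av hst))
      simp only at h1
      exact Fin.ext (by omega)
  -- facets Γ = range
  · ext x
    constructor
    · intro hx
      by_cases h : natFace av ≤ x
      · have h1 : x - natFace av ∈ facets (link Γ (natFace av)) := by
          rw [hFlk]; exact ⟨x, ⟨hx, h⟩, rfl⟩
        rw [herange] at h1
        obtain ⟨j, hj⟩ := h1
        refine ⟨Fin.natAdd p j, ?_⟩
        rw [glue_natAdd, hj, vec_sub_add av h]
      · have h1 : x ∈ facets (del Γ (natFace av)) := by
          rw [hFdel]; exact ⟨hx, h⟩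
        rw [hdrange] at h1
        obtain ⟨i, hi⟩ := h1
        exact ⟨Fin.castAdd q i, by rw [glue_castAdd]; exact hi⟩
    · rintro ⟨t, rfl⟩
      by_cases h : (t : ℕ) < p
      · rw [glue_lt _ _ t h]; exact (hdd ⟨t, h⟩).1
      · rw [glue_ge _ _ t h (by have := t.isLt; omega)]; exact (hed _).1
  -- 0/⊤ entries
  · intro t i
    by_cases h : (t : ℕ) < p
    · rw [glue_lt _ _ t h]; exact hmd01 ⟨t, h⟩ i
    · rw [glue_ge _ _ t h (by have := t.isLt; omega)]; exact hme01 _ i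
  -- Stanley decompositions
  · intro t
    by_cases h : (t : ℕ) < p
    · rw [glue_lt _ _ t h, glue_lt _ _ t h, glue_lt _ _ t h,
        glue_image_lt _ _ t h]
      exact hmdEq ⟨t, h⟩
    · have h2 : (t : ℕ) - p < q := by have := t.isLt; omega
      set j : Fin q := ⟨(t : ℕ) - p, h2⟩ with hjdef
      rw [glue_ge _ _ t h h2, glue_ge _ _ t h h2, glue_ge _ _ t h h2,
        glue_image_ge _ _ t h h2]
      rw [mcSpan_union, hrange_d_span, ← Set.diff_diff, hstar j]
      -- now prove the image juggling
      have hswap : ((fun c => natFace av + c) '' mcSpan {e j})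
            \ mcSpan ((fun j => natFace av + e j) '' {k : Fin q | k < j})
          = (fun c => natFace av + c) '' (mcSpan {e j} \ mcSpan (e '' {k | k < j})) := by
        ext x
        constructor
        · rintro ⟨⟨y, hy, rfl⟩, hnot⟩
          refine ⟨y, ⟨hy, fun hc => hnot ?_⟩, rfl⟩
          obtain ⟨g, ⟨k, hk, rfl⟩, hyg⟩ := hc
          exact ⟨natFace av + e k, ⟨k, hk, rfl⟩, (vec_add_le av).2 hyg⟩
        · rintro ⟨y, ⟨hy, hnot⟩, rfl⟩
          refine ⟨⟨y, hy, rfl⟩, fun hc => hnot ?_⟩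
          obtain ⟨g, ⟨k, hk, rfl⟩, hle⟩ := hc
          exact ⟨e k, ⟨k, hk, rfl⟩, (vec_add_le av).1 hle⟩
      rw [hswap, hmeEq j, ← Set.image_comp]
      have hcomp : ((fun c => natFace av + c) ∘ (fun c => natFace (be j) + c))
          = fun c => natFace (av + be j) + c := by
        funext c
        simp only [Function.comp_apply, natFace_add]
        rw [add_assoc]
      rw [hcomp]
  -- the ordering condition
  · intro s t hsub
    by_cases hs : (s : ℕ) < p <;> by_cases ht : (t : ℕ) < p
    · rw [glue_lt _ _ s hs, glue_lt _ _ t ht] at hsub ⊢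
      rcases hmdOrd ⟨s, hs⟩ ⟨t, ht⟩ hsub with h1 | h1
      · exact Or.inl h1
      · exact Or.inr (by exact h1)
    · -- the shedding condition (ii) case
      have h2 : (t : ℕ) - p < q := by have := t.isLt; omega
      rw [glue_lt _ _ s hs, glue_ge _ _ t ht h2] at hsub ⊢
      set ii : Fin p := ⟨s, hs⟩
      set jj : Fin q := ⟨(t : ℕ) - p, h2⟩
      have hle : md ii ≤ me jj := mcSpan_singleton_subset.1 hsub
      have h1 : infpt (md ii) = infpt (d ii) := by rw [hdtop ii, vec_infpt_add]
      have h3 : infpt (me jj) = infpt (natFace av + e jj) := by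
        rw [vec_infpt_add, hetop jj, vec_infpt_add]
      have hcF : natFace av + e jj ∈ facets (star Γ (natFace av)) :=
        Gst_subset_facets_star hΓ (hed jj)
      have hdF : d ii ∈ facets (del Γ (natFace av)) := by
        rw [hdrange]; exact Set.mem_range_self ii
      have hfpt : fpt (natFace av + e jj) ⊆ fpt (d ii) := by
        intro i hi hdi
        have him : i ∈ infpt (md ii) := by rw [h1]; exact hdi
        have hmd_top : md ii i = ⊤ := him
        have hme_top : me jj i = ⊤ := top_le_iff.1 (hmd_top ▸ hle i)
        have : i ∈ infpt (natFace av + e jj) := by rw [← h3]; exact hme_top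
        exact hi this
      have hfpt2 := hsh.2.2 _ hcF _ hdF hfpt
      have h4 : infpt (natFace av + e jj) = infpt (d ii) := infpt_eq_of_fpt_eq hfpt2
      have h5 : infpt (md ii) = infpt (me jj) := by rw [h1, ← h4, ← h3]
      have h6 : md ii = me jj := m01_eq (hmd01 ii) (hme01 jj) h5
      exact Or.inl (by rw [h6])
    · -- t in the first block, s in the second: t < s
      refine Or.inr ?_
      show (t : ℕ) < (s : ℕ)
      omega
    · have hs2 : (s : ℕ) - p < q := by have := s.isLt; omega
      have ht2 : (t : ℕ) - p < q := by have := t.isLt; omega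
      rw [glue_ge _ _ s hs hs2, glue_ge _ _ t ht ht2] at hsub ⊢
      rcases hmeOrd ⟨(s : ℕ) - p, hs2⟩ ⟨(t : ℕ) - p, ht2⟩ hsub with h1 | h1
      · exact Or.inl h1
      · refine Or.inr ?_
        show (t : ℕ) < (s : ℕ)
        have : (t : ℕ) - p < (s : ℕ) - p := h1
        omega

end Aux10e

/-- every `k`-decomposable multicomplex is shellable. -/
theorem mcKDecomposable_shellable {n : ℕ} (k : ℕ) (Γ : Set (Fin n → ENat))
    (hΓ : IsMulticomplex Γ) (h : MCKDecomposable k Γ) : Shellable Γ := by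
  revert hΓ
  induction h with
  | single Γ' hex =>
    intro hΓ'
    exact shellable_of_unique_facet hΓ' hex
  | shed Γ' av ha hcard h1 h2 ih1 ih2 =>
    intro hΓ'
    have hlmc : IsMulticomplex (link Γ' (natFace av)) :=
      isMulticomplex_mcSpan (((facets_finite hΓ').subset fun x hx => hx.1).image _)
    have hdmc : IsMulticomplex (del Γ' (natFace av)) :=
      isMulticomplex_mcSpan ((facets_finite hΓ').subset fun x hx => hx.1)
    exact shellable_shed hΓ' ha (ih1 hlmc) (ih2 hdmc)

end Arxiv1703
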